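/- Given RAGM, a revision operator ∗ satisfies both (C1) (for all ≤ and all nonempty B ⊆ A: min(B, ≤ ∗ A) = min(B, ≤)) and (P) (if min(B, ≤) ∩ A ≠ ∅ then min(B, ≤ ∗ A) ⊆ A) if and only if it satisfies the single rule (C1P): for all ≤ and all nonempty A, B ⊆ V, if min(B, ≤) ∩ A ≠ ∅ then min(B, ≤ ∗ A) = min(A ∩ B, ≤). -/
import Mathlib


open Set

variable {V : Type*}

/-- A total preorder: reflexive, transitive and total. -/
def IsTP (r : V → V → Prop) : Prop :=
  Reflexive r ∧ Transitive r ∧ ∀ v w, r v w ∨ r w v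

/-- The strict part of a relation: v < w iff v ≤ w and not w ≤ v. -/
def SRel (r : V → V → Prop) (v w : V) : Prop := r v w ∧ ¬ r w v

/-- min(A, ≤) = the ≤-minimal elements of A. -/
def mins (r : V → V → Prop) (A : Set V) : Set V :=
  {v | v ∈ A ∧ ∀ w ∈ A, r v w}

/-- A and B counteract with respect to r. -/
def Counter (r : V → V → Prop) (A B : Set V) : Prop :=
  mins r A ∩ B = ∅ ∧ mins r B ∩ A = ∅

/-- The restrained revision operator. -/
def restrained (r : V → V → Prop) (A : Set V) : V → V → Prop :=
  fun v w => v ∈ mins r A ∨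
    (w ∉ mins r A ∧ (SRel r v w ∨ (r v w ∧ (v ∈ A ∨ w ∉ A))))


lemma finset_min {V : Type*} (r : V → V → Prop) (h : IsTP r) (s : Finset V) :
    s.Nonempty → ∃ v ∈ s, ∀ w ∈ s, r v w := by
  classical
  induction s using Finset.induction_on with
  | empty => simp
  | @insert a s ha ih =>
    intro _
    by_cases hs : s.Nonempty
    · obtain ⟨v, hv, hmin⟩ := ih hs
      rcases h.2.2 v a with hva | hav
      · exact ⟨v, Finset.mem_insert_of_mem hv, fun w hw => by
          rcases Finset.mem_insert.mp hw with rfl | hw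
          exacts [hva, hmin w hw]⟩
      · exact ⟨a, Finset.mem_insert_self a s, fun w hw => by
          rcases Finset.mem_insert.mp hw with rfl | hw
          exacts [h.1 w, h.2.1 hav (hmin w hw)]⟩
    · refine ⟨a, Finset.mem_insert_self a s, fun w hw => ?_⟩
      rcases Finset.mem_insert.mp hw with rfl | hw
      · exact h.1 w
      · exact absurd ⟨w, hw⟩ hs

lemma mins_nonempty {V : Type*} [Fintype V] (r : V → V → Prop) (h : IsTP r)
    {A : Set V} (hA : A.Nonempty) : (mins r A).Nonempty := by
  classical
  obtain ⟨v, hv, hmin⟩ := finset_min r h A.toFinset (by simpa using hA)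
  exact ⟨v, by simpa using hv, fun w hw => hmin w (by simpa using hw)⟩

lemma mins_subset_shrink {V : Type*} (r : V → V → Prop) (h : IsTP r)
    {A C : Set V} (hCA : C ⊆ A) (hsub : mins r A ⊆ C) (hne : (mins r A).Nonempty) :
    mins r A = mins r C := by
  ext w
  constructor
  · rintro ⟨hwA, hmin⟩
    exact ⟨hsub ⟨hwA, hmin⟩, fun u hu => hmin u (hCA hu)⟩
  · rintro ⟨hwC, hmin⟩
    obtain ⟨v, hvA, hvmin⟩ := hne
    exact ⟨hCA hwC, fun u hu => h.2.1 (hmin v (hsub ⟨hvA, hvmin⟩)) (hvmin u hu)⟩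

lemma mins_inter_eq {V : Type*} (r : V → V → Prop) (h : IsTP r)
    {A B : Set V} (hne : (mins r B ∩ A).Nonempty) :
    mins r B ∩ A = mins r (A ∩ B) := by
  ext w
  constructor
  · rintro ⟨⟨hwB, hmin⟩, hwA⟩
    exact ⟨⟨hwA, hwB⟩, fun u hu => hmin u hu.2⟩
  · rintro ⟨⟨hwA, hwB⟩, hmin⟩
    obtain ⟨v, ⟨hvB, hvmin⟩, hvA⟩ := hne
    exact ⟨⟨hwB, fun u hu => h.2.1 (hmin v ⟨hvA, hvB⟩) (hvmin u hu)⟩, hwA⟩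

theorem stmt_11 [Fintype V] [Nonempty V]
    (op : (V → V → Prop) → Set V → (V → V → Prop))
    (htp : ∀ r (A : Set V), IsTP r → A.Nonempty → IsTP (op r A))
    (hragm : ∀ r (A : Set V), IsTP r → A.Nonempty →
      mins (op r A) Set.univ = mins r A) :
    (((∀ r (A B : Set V), IsTP r → B.Nonempty → B ⊆ A →
        mins (op r A) B = mins r B) ∧
      (∀ r (A B : Set V), IsTP r → A.Nonempty → B.Nonempty →
        (mins r B ∩ A).Nonempty → mins (op r A) B ⊆ A))
      ↔
     (∀ r (A B : Set V), IsTP r → A.Nonempty → B.Nonempty →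
        (mins r B ∩ A).Nonempty → mins (op r A) B = mins r (A ∩ B))) := by
  constructor
  · rintro ⟨hc1, hp⟩ r A B htpr hA hB hne
    have habne : (A ∩ B).Nonempty := by
      obtain ⟨v, ⟨hvB, _⟩, hvA⟩ := hne
      exact ⟨v, hvA, hvB⟩
    have hstp := htp r A htpr hA
    have hsub : mins (op r A) B ⊆ A ∩ B :=
      fun v hv => ⟨hp r A B htpr hA hB hne hv, hv.1⟩
    have hmne : (mins (op r A) B).Nonempty := mins_nonempty _ hstp hB
    have h1 : mins (op r A) B = mins (op r A) (A ∩ B) :=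
      mins_subset_shrink _ hstp (fun v hv => hv.2) hsub hmne
    have h2 : mins (op r A) (A ∩ B) = mins r (A ∩ B) :=
      hc1 r A (A ∩ B) htpr habne Set.inter_subset_left
    rw [h1, h2]
  · intro hc1p
    constructor
    · intro r A B htpr hB hBA
      have hA : A.Nonempty := hB.mono hBA
      have hne : (mins r B ∩ A).Nonempty := by
        obtain ⟨v, hv⟩ := mins_nonempty r htpr hB
        exact ⟨v, hv, hBA hv.1⟩
      have := hc1p r A B htpr hA hB hne
      rwa [Set.inter_eq_self_of_subset_right hBA] at this
    · intro r A B htpr hA hB hne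
      rw [hc1p r A B htpr hA hB hne]
      exact fun v hv => hv.1.1
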